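/- Let A be a 2-integral probability group with exactly three elements. Then exactly one of the following holds: (i) all values of p lie in {0,1}, every element has size 1, and the induced operation makes A a cyclic group of order 3 (so A is the probability group A(ℂℤ₃)); or (ii) A = {1, x, y} with x⁻¹ = x, y⁻¹ = y, s(x) = 4, s(y) = 1, p(x·x=1) = 1/4, p(x·x=x) = 1/2, p(x·x=y) = 1/4, p(x·y=x) = p(y·x=x) = 1, p(y·y=1) = 1, and all other probabilities zero (so A is the probability group A(ℂS₃) of irreducible characters of S₃). -/

import Mathlib

/-! Put `deg a = √s(a)` and `mult a b c = p(a·b=c) · deg a · deg b / deg c`; 2-integrality makes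
both natural numbers (for `A(ℂG)` they are character degrees and tensor product multiplicities).
Summing `p(a·b=·)` gives `∑_c mult a b c · deg c = deg a · deg b`, and associativity tested
against `1` gives the cyclic symmetry `mult a b c⁻¹ = mult b c a⁻¹`.

Write `A = {1, a, b}`. Either `a⁻¹ = b`, or `a` and `b` are both self-inverse. In the first case
the row of `a·b` reads `1 + 2mn = n²`, so every degree is `1`; then `p` is `{0,1}`-valued and is
the multiplication table of a group without elements of order `2`. In the second case the rows of
`a·a`, `b·b`, `a·b` read `1 + m₁n + m₂k = n²`, `1 + m₃n + m₄k = k²`, `m₂n + m₃k = nk`; the first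
makes `n` and `k` coprime, so `n ∣ m₃` and `k ∣ m₂`, hence `m₂ = 0` or `m₃ = 0`, and then
`{n, k} = {1, 2}`, which is the character table of `S₃`. -/

/-- A probability group (Harrison): a set `A` with a distinguished element `one`,
an inverse map `inv`, and a probability map `p` satisfying axioms (1)-(6). -/
structure ProbabilityGroup (A : Type*) where
  /-- the probability map: `p a b c` is `p(a·b = c)` -/
  p : A → A → A → ℝ
  /-- the unit element -/
  one : A
  /-- the inverse map -/
  inv : A → A
  p_nonneg : ∀ a b c, 0 ≤ p a b c
  finite_support : ∀ a b, {c | p a b c ≠ 0}.Finite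
  sum_eq_one : ∀ a b, ∑ᶠ c, p a b c = 1
  assoc : ∀ a b c d, ∑ᶠ x, p a b x * p x c d = ∑ᶠ y, p a y d * p b c y
  one_mul : ∀ a, p one a a = 1
  mul_one : ∀ a, p a one a = 1
  inv_pos : ∀ a, 0 < p a (inv a) one
  inv_unique : ∀ a b, 0 < p a b one → b = inv a
  p_inv : ∀ a b c, p a b c = p (inv b) (inv a) (inv c)
  inv_symm : ∀ a, p a (inv a) one = p (inv a) a one

/-- The size `s(a) = 1 / p(a·a⁻¹ = 1)` of an element of a probability group. -/
noncomputable def ProbabilityGroup.s {A : Type*} (P : ProbabilityGroup A) (a : A) : ℝ :=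
  1 / P.p a (P.inv a) P.one

/-- A probability group is 2-integral if each `s(a)^(1/2)` is a positive integer and
`p(a·b=c) s(a)^(1/2) s(b)^(1/2) / s(c)^(1/2)` is always a non-negative integer. -/
def ProbabilityGroup.TwoIntegral {A : Type*} (P : ProbabilityGroup A) : Prop :=
  (∀ a, ∃ n : ℕ, 0 < n ∧ Real.sqrt (P.s a) = n) ∧
  (∀ a b c, ∃ n : ℕ,
    P.p a b c * Real.sqrt (P.s a) * Real.sqrt (P.s b) / Real.sqrt (P.s c) = n)

/-- The probability-map data of `A(ℂS₃)` on `{1, a, b}` (with `a` the class of the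
2-dimensional character and `b` the sign character). -/
def ProbabilityGroup.S3spec {A : Type*} (P : ProbabilityGroup A) (a b : A) : Prop :=
  P.s a = 4 ∧ P.s b = 1 ∧
  P.p a a P.one = 1 / 4 ∧ P.p a a a = 1 / 2 ∧ P.p a a b = 1 / 4 ∧
  P.p a b a = 1 ∧ P.p b a a = 1 ∧ P.p a b b = 0 ∧ P.p b a b = 0 ∧
  P.p a b P.one = 0 ∧ P.p b a P.one = 0 ∧
  P.p b b P.one = 1 ∧ P.p b b a = 0 ∧ P.p b b b = 0

theorem finsum_eq_add_add_of_forall_eq_or {α M : Type*} [AddCommMonoid M] {x y z : α}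
    (hxy : x ≠ y) (hxz : x ≠ z) (hyz : y ≠ z) (h : ∀ w, w = x ∨ w = y ∨ w = z) (f : α → M) :
    ∑ᶠ w, f w = f x + f y + f z := by
  classical
  rw [finsum_eq_sum_of_support_subset f (s := {x, y, z}) fun w _ => by simpa using h w,
    Finset.sum_insert (by simp [hxy, hxz]), Finset.sum_pair hyz, add_assoc]

theorem exists_pair_ne_of_card_eq_three {α : Type*} [Fintype α] (hα : Fintype.card α = 3)
    (o : α) : ∃ a b : α, a ≠ o ∧ b ≠ o ∧ a ≠ b ∧ ∀ z, z = o ∨ z = a ∨ z = b := by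
  classical
  have hcard : (Finset.univ.erase o).card = 2 := by simp [hα]
  obtain ⟨a, b, hab, hs⟩ := Finset.card_eq_two.mp hcard
  have hmem : ∀ z, z ≠ o ↔ z = a ∨ z = b := fun z => by
    simpa using congrArg (z ∈ ·) hs
  refine ⟨a, b, (hmem a).2 (Or.inl rfl), (hmem b).2 (Or.inr rfl), hab, fun z => ?_⟩
  by_cases hz : z = o
  · exact Or.inl hz
  · exact Or.inr ((hmem z).1 hz)

theorem eq_one_of_one_add_mul_eq_mul_self {n m : ℕ} (h : 1 + m * n = n * n) : n = 1 :=
  Nat.eq_one_of_dvd_one <| (Nat.dvd_add_right (dvd_mul_left n m)).mp <| by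
    rw [add_comm, h]
    exact dvd_mul_left n n

theorem eq_two_one_of_row_eqs_of_eq_zero {n k m₁ m₂ m₃ m₄ : ℕ} (hn : 0 < n)
    (e₁ : 1 + m₁ * n + m₂ * k = n * n) (e₂ : 1 + m₃ * n + m₄ * k = k * k)
    (e₃ : m₂ * n + m₃ * k = n * k) (h₃ : m₃ = 0) :
    n = 2 ∧ k = 1 ∧ m₁ = 1 ∧ m₂ = 1 ∧ m₄ = 0 := by
  subst h₃
  have hm₂ : m₂ = k := Nat.eq_of_mul_eq_mul_right hn (by linarith)
  have hk : k = 1 := eq_one_of_one_add_mul_eq_mul_self (m := m₄) (by linarith)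
  subst hm₂ hk
  have hn2 : n ∣ 2 := (Nat.dvd_add_right (dvd_mul_left n m₁)).mp <| by
    rw [show m₁ * n + 2 = n * n by omega]
    exact dvd_mul_left n n
  have : n ≤ 2 := Nat.le_of_dvd two_pos hn2
  interval_cases n <;> omega

theorem eq_two_one_or_eq_one_two_of_row_eqs {n k m₁ m₂ m₃ m₄ : ℕ} (hn : 0 < n) (hk : 0 < k)
    (e₁ : 1 + m₁ * n + m₂ * k = n * n) (e₂ : 1 + m₃ * n + m₄ * k = k * k)
    (e₃ : m₂ * n + m₃ * k = n * k) :
    (n = 2 ∧ k = 1 ∧ m₁ = 1 ∧ m₂ = 1 ∧ m₃ = 0 ∧ m₄ = 0) ∨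
      (n = 1 ∧ k = 2 ∧ m₁ = 0 ∧ m₂ = 0 ∧ m₃ = 1 ∧ m₄ = 1) := by
  have hcop : n.Coprime k := by
    have hd : n.gcd k ∣ m₁ * n + m₂ * k + 1 := by
      rw [show m₁ * n + m₂ * k + 1 = n * n by omega]
      exact (Nat.gcd_dvd_left n k).mul_left n
    exact Nat.eq_one_of_dvd_one <| (Nat.dvd_add_right (dvd_add
      ((Nat.gcd_dvd_left n k).mul_left m₁) ((Nat.gcd_dvd_right n k).mul_left m₂))).mp hd
  rcases Nat.eq_zero_or_pos m₃ with h₃ | h₃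
  · obtain ⟨hn2, hk1, hm₁, hm₂, hm₄⟩ := eq_two_one_of_row_eqs_of_eq_zero hn e₁ e₂ e₃ h₃
    exact Or.inl ⟨hn2, hk1, hm₁, hm₂, h₃, hm₄⟩
  · have hdvd : n ∣ m₃ := hcop.dvd_of_dvd_mul_right <|
      (Nat.dvd_add_right (dvd_mul_left n m₂)).mp (e₃ ▸ dvd_mul_right n k)
    have h₂ : m₂ = 0 := by nlinarith [Nat.le_of_dvd h₃ hdvd]
    -- the equations are invariant under `(n, k, m₁, m₂, m₃, m₄) ↦ (k, n, m₄, m₃, m₂, m₁)`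
    obtain ⟨hk2, hn1, hm₄, hm₃, hm₁⟩ :=
      eq_two_one_of_row_eqs_of_eq_zero hk ((add_right_comm _ _ _).trans e₂)
        ((add_right_comm _ _ _).trans e₁) (by rw [add_comm, mul_comm k]; exact e₃) h₂
    exact Or.inr ⟨hn1, hk2, hm₁, h₂, hm₃, hm₄⟩

namespace ProbabilityGroup

variable {A : Type*} (P : ProbabilityGroup A)

theorem p_le_one (a b c : A) : P.p a b c ≤ 1 :=
  P.sum_eq_one a b ▸ single_le_finsum c (P.finite_support a b) (P.p_nonneg a b)

theorem p_eq_zero_of_p_eq_one {a b c c' : A} (h : P.p a b c = 1) (hc : c' ≠ c) :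
    P.p a b c' = 0 := by
  classical
  let s := (P.finite_support a b).toFinset ∪ {c, c'}
  have hle : P.p a b c + P.p a b c' ≤ 1 := by
    rw [← Finset.sum_pair hc.symm, ← P.sum_eq_one a b,
      finsum_eq_sum_of_support_subset _ (s := s) fun x hx => by
        simp [s, Function.mem_support.mp hx]]
    exact Finset.sum_le_sum_of_subset_of_nonneg (by simp [s]) fun _ _ _ => P.p_nonneg _ _ _
  linarith [P.p_nonneg a b c']

theorem inv_inv (a : A) : P.inv (P.inv a) = a :=
  (P.inv_unique (P.inv a) a (by rw [← P.inv_symm]; exact P.inv_pos a)).symm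

theorem inv_injective : Function.Injective P.inv :=
  Function.LeftInverse.injective P.inv_inv

theorem inv_one : P.inv P.one = P.one :=
  (P.inv_unique _ _ (by rw [P.one_mul]; exact one_pos)).symm

theorem inv_eq_of_p_eq_one {a b : A} (h : P.p a b P.one = 1) : P.inv a = b :=
  (P.inv_unique a b (h ▸ one_pos)).symm

theorem p_eq_zero_of_ne_inv {a b : A} (h : b ≠ P.inv a) : P.p a b P.one = 0 :=
  (P.p_nonneg a b P.one).eq_or_lt.elim Eq.symm fun hpos => absurd (P.inv_unique a b hpos) h

theorem s_pos (a : A) : 0 < P.s a :=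
  one_div_pos.mpr (P.inv_pos a)

theorem p_inv_self_one_mul_s (a : A) : P.p a (P.inv a) P.one * P.s a = 1 :=
  mul_one_div_cancel (P.inv_pos a).ne'

theorem s_inv (a : A) : P.s (P.inv a) = P.s a := by
  rw [s, s, inv_inv, ← inv_symm]

theorem s_one : P.s P.one = 1 := by
  rw [s, inv_one, P.one_mul, div_one]

theorem p_inv_mul_s (a b c : A) :
    P.p a b (P.inv c) * P.s a = P.p b c (P.inv a) * P.s c := by
  have hl : ∑ᶠ x, P.p a b x * P.p x c P.one = P.p a b (P.inv c) * P.p (P.inv c) c P.one :=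
    finsum_eq_single _ _ fun x hx =>
      mul_eq_zero_of_right _ (P.p_eq_zero_of_ne_inv fun h => hx (by rw [h, inv_inv]))
  have hr : ∑ᶠ y, P.p a y P.one * P.p b c y = P.p a (P.inv a) P.one * P.p b c (P.inv a) :=
    finsum_eq_single _ _ fun y hy => mul_eq_zero_of_left (P.p_eq_zero_of_ne_inv hy) _
  have h := P.assoc a b c P.one
  rw [hl, hr, ← P.inv_symm] at h
  linear_combination (P.s a * P.s c) * h - P.p a b (P.inv c) * P.s a * P.p_inv_self_one_mul_s c
    + P.p b c (P.inv a) * P.s c * P.p_inv_self_one_mul_s a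

noncomputable def deg (a : A) : ℝ :=
  Real.sqrt (P.s a)

noncomputable def mult (a b c : A) : ℝ :=
  P.p a b c * P.deg a * P.deg b / P.deg c

theorem deg_pos (a : A) : 0 < P.deg a :=
  Real.sqrt_pos.mpr (P.s_pos a)

theorem deg_mul_self (a : A) : P.deg a * P.deg a = P.s a :=
  Real.mul_self_sqrt (P.s_pos a).le

theorem deg_inv (a : A) : P.deg (P.inv a) = P.deg a := by
  rw [deg, deg, s_inv]

theorem deg_one : P.deg P.one = 1 := by
  rw [deg, s_one, Real.sqrt_one]

theorem mult_mul_deg (a b c : A) : P.mult a b c * P.deg c = P.p a b c * P.deg a * P.deg b :=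
  div_mul_cancel₀ _ (P.deg_pos c).ne'

theorem p_eq_mult_mul_deg_div (a b c : A) :
    P.p a b c = P.mult a b c * P.deg c / (P.deg a * P.deg b) := by
  rw [mult_mul_deg, mul_assoc, mul_div_cancel_right₀ _ (mul_pos (P.deg_pos a) (P.deg_pos b)).ne']

theorem finsum_mult_mul_deg (a b : A) : ∑ᶠ c, P.mult a b c * P.deg c = P.deg a * P.deg b := by
  simp_rw [mult_mul_deg, mul_assoc]
  rw [← finsum_mul, P.sum_eq_one, _root_.one_mul]

theorem mult_inv_inv (a b c : A) :
    P.mult (P.inv b) (P.inv a) (P.inv c) = P.mult a b c := by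
  rw [mult, mult, ← P.p_inv, deg_inv, deg_inv, deg_inv, mul_right_comm (P.p a b c)]

theorem mult_rotate (a b c : A) : P.mult a b (P.inv c) = P.mult b c (P.inv a) := by
  have h := P.p_inv_mul_s a b c
  rw [← deg_mul_self, ← deg_mul_self] at h
  have := P.deg_pos a
  have := P.deg_pos c
  rw [mult, mult, deg_inv, deg_inv]
  field_simp
  linear_combination P.deg b * h

theorem mult_rotate_of_inv_eq {a c : A} (ha : P.inv a = a) (hc : P.inv c = c) (b : A) :
    P.mult a b c = P.mult b c a := by
  simpa [ha, hc] using P.mult_rotate a b c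

theorem mult_inv_self_one (a : A) : P.mult a (P.inv a) P.one = 1 := by
  rw [mult, deg_inv, deg_one, div_one, mul_assoc, deg_mul_self, p_inv_self_one_mul_s]

theorem mult_one_eq_zero_of_ne_inv {a b : A} (h : b ≠ P.inv a) : P.mult a b P.one = 0 := by
  rw [mult, P.p_eq_zero_of_ne_inv h, zero_mul, zero_mul, zero_div]

theorem exists_mul_of_p_eq_zero_or_one (h01 : ∀ a b c, P.p a b c = 0 ∨ P.p a b c = 1) :
    ∃ mul : A → A → A, (∀ a b, P.p a b (mul a b) = 1) ∧
      (∀ a b c, mul (mul a b) c = mul a (mul b c)) ∧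
      (∀ a, mul P.one a = a) ∧ (∀ a, mul a P.one = a) ∧ (∀ a, mul a (P.inv a) = P.one) := by
  have hex : ∀ a b, ∃ c, P.p a b c = 1 := by
    intro a b
    by_contra! h
    have hzero : ∀ c, P.p a b c = 0 := fun c => (h01 a b c).resolve_right (h c)
    simpa [hzero] using P.sum_eq_one a b
  choose mul hmul using hex
  have hunique : ∀ a b c, P.p a b c = 1 → c = mul a b := fun a b c h => by
    by_contra hc
    simpa [h] using P.p_eq_zero_of_p_eq_one (hmul a b) hc
  refine ⟨mul, hmul, fun a b c => hunique _ _ _ ?_,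
    fun a => (hunique _ _ _ (P.one_mul a)).symm, fun a => (hunique _ _ _ (P.mul_one a)).symm,
    fun a => (hunique _ _ _ ((h01 _ _ _).resolve_left (P.inv_pos a).ne')).symm⟩
  have h := P.assoc a b c (mul (mul a b) c)
  rwa [finsum_eq_single _ (mul a b) fun x hx =>
      mul_eq_zero_of_left (P.p_eq_zero_of_p_eq_one (hmul a b) hx) _,
    finsum_eq_single _ (mul b c) fun y hy =>
      mul_eq_zero_of_right _ (P.p_eq_zero_of_p_eq_one (hmul b c) hy),
    hmul, hmul, hmul, _root_.one_mul, _root_.mul_one, eq_comm] at h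

theorem S3spec_of_mult {x y : A} (hx : P.inv x = x) (hy : P.inv y = y)
    (hdx : P.deg x = 2) (hdy : P.deg y = 1) (hxxx : P.mult x x x = 1) (hxxy : P.mult x x y = 1)
    (hyyx : P.mult y y x = 0) (hyyy : P.mult y y y = 0) : P.S3spec x y := by
  have hxy : y ≠ x := fun h => by norm_num [h, hdx] at hdy
  have hxx1 : P.mult x x P.one = 1 := by simpa [hx] using P.mult_inv_self_one x
  have hyy1 : P.mult y y P.one = 1 := by simpa [hy] using P.mult_inv_self_one y
  have hxy1 : P.mult x y P.one = 0 := P.mult_one_eq_zero_of_ne_inv (by rw [hx]; exact hxy)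
  have hyx1 : P.mult y x P.one = 0 := P.mult_one_eq_zero_of_ne_inv (by rw [hy]; exact hxy.symm)
  have hxyx : P.mult x y x = 1 := by rw [← P.mult_rotate_of_inv_eq hx hy, hxxy]
  have hyxx : P.mult y x x = 1 := by rw [← P.mult_rotate_of_inv_eq hx hx, hxyx]
  have hxyy : P.mult x y y = 0 := by rw [P.mult_rotate_of_inv_eq hx hy, hyyx]
  have hyxy : P.mult y x y = 0 := by rw [P.mult_rotate_of_inv_eq hy hy, hxyy]
  simp only [S3spec, ← deg_mul_self, p_eq_mult_mul_deg_div, deg_one, hdx, hdy, hxxx, hxxy,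
    hyyx, hyyy, hxx1, hyy1, hxy1, hyx1, hxyx, hyxx, hxyy, hyxy]
  norm_num

variable {P}

theorem TwoIntegral.exists_deg_eq (h2 : P.TwoIntegral) (a : A) :
    ∃ n : ℕ, 0 < n ∧ P.deg a = n :=
  h2.1 a

theorem TwoIntegral.exists_mult_eq (h2 : P.TwoIntegral) (a b c : A) :
    ∃ m : ℕ, P.mult a b c = m :=
  h2.2 a b c

theorem TwoIntegral.p_eq_zero_or_one_of_deg_eq_one (h2 : P.TwoIntegral)
    (hdeg : ∀ a, P.deg a = 1) (a b c : A) : P.p a b c = 0 ∨ P.p a b c = 1 := by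
  obtain ⟨m, hm⟩ := h2.exists_mult_eq a b c
  have hp : P.p a b c = m := by simpa [mult, hdeg] using hm
  have : m ≤ 1 := by exact_mod_cast hp ▸ P.p_le_one a b c
  interval_cases m <;> simp [hp]

variable (P)

section ThreeElements

variable {a b : A}

theorem mult_one_add_mult_mul_deg_add_mult_mul_deg (ha : a ≠ P.one) (hb : b ≠ P.one) (hab : a ≠ b)
    (huniv : ∀ z, z = P.one ∨ z = a ∨ z = b) (x y : A) :
    P.mult x y P.one + P.mult x y a * P.deg a + P.mult x y b * P.deg b = P.deg x * P.deg y := by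
  rw [← P.finsum_mult_mul_deg,
    finsum_eq_add_add_of_forall_eq_or ha.symm hb.symm hab huniv, deg_one, _root_.mul_one]

theorem inv_eq_self_or_inv_eq (ha : a ≠ P.one) (hb : b ≠ P.one) (hab : a ≠ b)
    (huniv : ∀ z, z = P.one ∨ z = a ∨ z = b) :
    (P.inv a = a ∧ P.inv b = b) ∨ P.inv a = b := by
  have hne_one : ∀ {z}, z ≠ P.one → P.inv z ≠ P.one := fun hz h =>
    hz (P.inv_injective (h.trans P.inv_one.symm))
  rcases huniv (P.inv a) with h | h | h
  · exact absurd h (hne_one ha)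
  · refine Or.inl ⟨h, ?_⟩
    rcases huniv (P.inv b) with h' | h' | h'
    · exact absurd h' (hne_one hb)
    · exact absurd (P.inv_injective (h'.trans h.symm)) hab.symm
    · exact h'
  · exact Or.inr h

theorem inv_ne_self_of_inv_eq (hab : a ≠ b) (huniv : ∀ z, z = P.one ∨ z = a ∨ z = b)
    (hia : P.inv a = b) {g : A} (hg : g ≠ P.one) : P.inv g ≠ g := by
  rcases huniv g with h | h | h
  · exact absurd h hg
  · rw [h, hia]
    exact hab.symm
  · rw [h, show P.inv b = a by rw [← hia, inv_inv]]
    exact hab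

theorem deg_eq_one_of_inv_eq (h2 : P.TwoIntegral) (ha : a ≠ P.one) (hb : b ≠ P.one)
    (hab : a ≠ b) (huniv : ∀ z, z = P.one ∨ z = a ∨ z = b) (hia : P.inv a = b) (z : A) :
    P.deg z = 1 := by
  have hib : P.inv b = a := by rw [← hia, inv_inv]
  have hdb : P.deg b = P.deg a := by rw [← hia, deg_inv]
  have hab1 : P.mult a b P.one = 1 := by simpa [hia] using P.mult_inv_self_one a
  have habb : P.mult a b b = P.mult a b a := by simpa [hia, hib] using P.mult_inv_inv a b a
  obtain ⟨n, -, hn⟩ := h2.exists_deg_eq a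
  obtain ⟨m, hm⟩ := h2.exists_mult_eq a b a
  have hrow := P.mult_one_add_mult_mul_deg_add_mult_mul_deg ha hb hab huniv a b
  rw [hab1, habb, hm, hdb, hn] at hrow
  have hn1 : n = 1 := eq_one_of_one_add_mul_eq_mul_self (m := 2 * m) <| by
    exact_mod_cast (show ((1 + 2 * m * n : ℕ) : ℝ) = (n * n : ℕ) by push_cast; linarith)
  rcases huniv z with h | h | h <;> subst h
  · exact P.deg_one
  · rw [hn, hn1, Nat.cast_one]
  · rw [hdb, hn, hn1, Nat.cast_one]

theorem exists_S3spec_of_inv_eq_self (h2 : P.TwoIntegral) (ha : a ≠ P.one) (hb : b ≠ P.one)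
    (hab : a ≠ b) (huniv : ∀ z, z = P.one ∨ z = a ∨ z = b)
    (hia : P.inv a = a) (hib : P.inv b = b) :
    ∃ x y : A, x ≠ P.one ∧ y ≠ P.one ∧ x ≠ y ∧ (∀ z : A, z = P.one ∨ z = x ∨ z = y) ∧
      P.inv x = x ∧ P.inv y = y ∧ P.S3spec x y := by
  have haa1 : P.mult a a P.one = 1 := by simpa [hia] using P.mult_inv_self_one a
  have hbb1 : P.mult b b P.one = 1 := by simpa [hib] using P.mult_inv_self_one b
  have hab1 : P.mult a b P.one = 0 := P.mult_one_eq_zero_of_ne_inv (by rw [hia]; exact hab.symm)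
  have haba : P.mult a b a = P.mult a a b := (P.mult_rotate_of_inv_eq hia hib a).symm
  have habb : P.mult a b b = P.mult b b a := P.mult_rotate_of_inv_eq hia hib b
  have hrow := P.mult_one_add_mult_mul_deg_add_mult_mul_deg ha hb hab huniv
  have haa := hrow a a
  have hbb := hrow b b
  have hab' := hrow a b
  obtain ⟨n, hn, hdn⟩ := h2.exists_deg_eq a
  obtain ⟨k, hk, hdk⟩ := h2.exists_deg_eq b
  obtain ⟨m₁, h₁⟩ := h2.exists_mult_eq a a a
  obtain ⟨m₂, h₂⟩ := h2.exists_mult_eq a a b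
  obtain ⟨m₃, h₃⟩ := h2.exists_mult_eq b b a
  obtain ⟨m₄, h₄⟩ := h2.exists_mult_eq b b b
  rw [haa1, h₁, h₂, hdn, hdk] at haa
  rw [hbb1, h₃, h₄, hdn, hdk] at hbb
  rw [hab1, haba, habb, h₂, h₃, hdn, hdk] at hab'
  have hab'' : ((m₂ * n + m₃ * k : ℕ) : ℝ) = (n * k : ℕ) := by push_cast; linarith
  rcases eq_two_one_or_eq_one_two_of_row_eqs hn hk (by exact_mod_cast haa)
      (by exact_mod_cast hbb) (by exact_mod_cast hab'') with
    ⟨rfl, rfl, rfl, rfl, rfl, rfl⟩ | ⟨rfl, rfl, rfl, rfl, rfl, rfl⟩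
  · refine ⟨a, b, ha, hb, hab, huniv, hia, hib, P.S3spec_of_mult hia hib ?_ ?_ ?_ ?_ ?_ ?_⟩ <;>
      simp [hdn, hdk, h₁, h₂, h₃, h₄]
  · refine ⟨b, a, hb, ha, hab.symm, fun z => (huniv z).imp_right Or.symm, hib, hia,
      P.S3spec_of_mult hib hia ?_ ?_ ?_ ?_ ?_ ?_⟩ <;> simp [hdn, hdk, h₁, h₂, h₃, h₄]

end ThreeElements

end ProbabilityGroup

/-- Classification: a 2-integral probability group with exactly three elements is either
(i) a cyclic group of order 3 (i.e. `A(ℂℤ₃)`: all probabilities in `{0,1}`, all sizes 1,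
and the induced operation is a group operation with no element of order 2), or
(ii) the probability group `A(ℂS₃)` of irreducible characters of `S₃` — and exactly one
of the two cases occurs. -/
theorem twoIntegral_card_three_classification {A : Type*} [Fintype A]
    (P : ProbabilityGroup A) (hcard : Fintype.card A = 3) (h2 : P.TwoIntegral) :
    Xor'
      ((∀ a b c, P.p a b c = 0 ∨ P.p a b c = 1) ∧ (∀ a, P.s a = 1) ∧
        ∃ mul : A → A → A,
          (∀ a b, P.p a b (mul a b) = 1) ∧
          (∀ a b c, mul (mul a b) c = mul a (mul b c)) ∧
          (∀ a, mul P.one a = a) ∧ (∀ a, mul a P.one = a) ∧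
          (∀ a, mul a (P.inv a) = P.one) ∧
          (∀ g, g ≠ P.one → mul g g ≠ P.one))
      (∃ x y : A, x ≠ P.one ∧ y ≠ P.one ∧ x ≠ y ∧
        (∀ z : A, z = P.one ∨ z = x ∨ z = y) ∧
        P.inv x = x ∧ P.inv y = y ∧ P.S3spec x y) := by
  refine (xor_iff_or_and_not_and _ _).mpr ⟨?_, ?_⟩
  · obtain ⟨a, b, ha, hb, hab, huniv⟩ := exists_pair_ne_of_card_eq_three hcard P.one
    rcases P.inv_eq_self_or_inv_eq ha hb hab huniv with ⟨hia, hib⟩ | hia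
    · exact Or.inr (P.exists_S3spec_of_inv_eq_self h2 ha hb hab huniv hia hib)
    · have hdeg := P.deg_eq_one_of_inv_eq h2 ha hb hab huniv hia
      have h01 := h2.p_eq_zero_or_one_of_deg_eq_one hdeg
      obtain ⟨mul, hmul, hassoc, hone_mul, hmul_one, hmul_inv⟩ :=
        P.exists_mul_of_p_eq_zero_or_one h01
      refine Or.inl ⟨h01, fun z => by rw [← P.deg_mul_self, hdeg, one_mul], mul, hmul, hassoc,
        hone_mul, hmul_one, hmul_inv, fun g hg hgg => ?_⟩
      exact P.inv_ne_self_of_inv_eq hab huniv hia hg (P.inv_eq_of_p_eq_one (hgg ▸ hmul g g))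
  · rintro ⟨⟨-, hs, -⟩, x, _, -, -, -, -, -, -, hx⟩
    exact absurd ((hs x).symm.trans hx.1) (by norm_num)
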